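/- arXiv:1708.09020 — 2 statements merged into one kernel-verified Lean document; each statement's English description precedes it below -/
import Mathlib

section
/- For every episode k, the expected regret of Thompson Pricing at episode k satisfies Δ_k := E[V^k_{P*_k} − V^k_{P_k}] ≤ q·p_max·E[Σ_{h=1}^H ‖f_{θ̂_k}(U_{k,h}, z_k) − f_θ(U_{k,h}, z_k)‖₂], where U_{k,h} = (P_{k,h}, S_{k,h}) is the price vector and state arising at period h of episode k under the policy P_k, provided that, conditioned on the history H_k, θ̂_k and θ are identically distributed. -/
/-!
Statement 7 (Lemma 2): in the general `q`-product episodic pricing scenario, for every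
episode `k`,
`Δ_k := E[V^k_{P*_k} − V^k_{P_k}] ≤ q·p_max·E[Σ_{h<H} ‖f_{θ̂_k}(U_{k,h}, z_k) − f_θ(U_{k,h}, z_k)‖₂]`,
where `U_{k,h} = (P_{k,h}, S_{k,h})` is the price vector and state at period `h` of
episode `k` under the applied policy `P_k`, provided that, conditioned on the history
`ℋ_k`, `θ̂_k` and `θ` are identically distributed.

Periods are 0-indexed; both `P*_k` and `P_k` are produced by a fixed optimal policy
map `Pol`, applied to `(θ, z_k)` and `(θ̂_k, z_k)` respectively.
-/

noncomputable section
open MeasureTheory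

/-- The state at (0-indexed) period `h`: the previous (at most `n`) price vectors
`[P_{max(0,h-n)}, …, P_{h-1}]`. -/
def priceHistory {P : Type*} (n : ℕ) (p : ℕ → P) (h : ℕ) : List P :=
  ((List.range h).drop (h - n)).map p

/-- Episode value of the policy `P = (P_0,…,P_{H-1})` under the demand function `g`. -/
def epValue (q H n : ℕ) (g : (Fin q → ℝ) → List (Fin q → ℝ) → EuclideanSpace ℝ (Fin q))
    (P : ℕ → Fin q → ℝ) : ℝ :=
  ∑ h ∈ Finset.range H, ∑ j, P h j * g (P h) (priceHistory n P h) j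

/-- A policy is admissible when all prices of the episode lie in `[0, p_max]`. -/
def Admissible (q H : ℕ) (pmax : ℝ) (P : ℕ → Fin q → ℝ) : Prop :=
  ∀ h < H, ∀ j, P h j ∈ Set.Icc 0 pmax


private lemma coord_le_norm {q : ℕ} (x : EuclideanSpace ℝ (Fin q)) (j : Fin q) : |x j| ≤ ‖x‖ := by
  rw [EuclideanSpace.norm_eq]
  rw [show |x j| = Real.sqrt (‖x j‖ ^ 2) by rw [Real.sqrt_sq_eq_abs]; simp]
  apply Real.sqrt_le_sqrt
  exact Finset.single_le_sum (f := fun i => ‖x i‖ ^ 2) (fun i _ => by positivity) (Finset.mem_univ j)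

private lemma sum_mul_diff_le {q : ℕ} (pmax : ℝ) (hp : 0 < pmax) (P : Fin q → ℝ)
    (hP : ∀ j, P j ∈ Set.Icc 0 pmax) (a b : EuclideanSpace ℝ (Fin q)) :
    ∑ j, P j * a j - ∑ j, P j * b j ≤ q * pmax * ‖a - b‖ := by
  rw [← Finset.sum_sub_distrib]
  have h : ∀ j ∈ Finset.univ, P j * a j - P j * b j ≤ pmax * ‖a - b‖ := by
    intro j _
    rw [← mul_sub]
    calc P j * (a j - b j) ≤ |P j * (a j - b j)| := le_abs_self _
      _ = |P j| * |a j - b j| := abs_mul _ _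
      _ ≤ pmax * ‖a - b‖ := by
          apply mul_le_mul (abs_le.mpr ⟨by linarith [(hP j).1], (hP j).2⟩) ?_ (abs_nonneg _) hp.le
          have := coord_le_norm (a - b) j
          simpa using this
  calc ∑ j, (P j * a j - P j * b j) ≤ ∑ j : Fin q, pmax * ‖a - b‖ := Finset.sum_le_sum h
    _ = q * pmax * ‖a - b‖ := by rw [Finset.sum_const]; simp [mul_assoc]

theorem episode_regret_le
    (q m n H : ℕ) (pmax dmax : ℝ)
    (hq : 0 < q) (hH : 0 < H) (hpmax : 0 < pmax) (hdmax : 0 < dmax)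
    (Ω : Type) [MeasurableSpace Ω] (μ : Measure Ω) [IsProbabilityMeasure μ]
    (Θ : Type) [MeasurableSpace Θ] (ΘSet : Set Θ)
    (f : Θ → (Fin q → ℝ) → List (Fin q → ℝ) → (Fin m → ℝ) → EuclideanSpace ℝ (Fin q))
    (θ : Ω → Θ) (θhat : ℕ → Ω → Θ) (z : ℕ → Ω → (Fin m → ℝ))
    (Pol : Θ → (Fin m → ℝ) → ℕ → Fin q → ℝ)
    (hist : ℕ → MeasurableSpace Ω)
    (hhist : ∀ k, hist k ≤ ‹MeasurableSpace Ω›)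
    (hθsupp : ∀ ω, θ ω ∈ ΘSet) (hθhatsupp : ∀ k ω, θhat k ω ∈ ΘSet)
    (hPolAdm : ∀ t v, Admissible q H pmax (Pol t v))
    (hPolOpt : ∀ t ∈ ΘSet, ∀ (v : Fin m → ℝ) (P : ℕ → Fin q → ℝ), Admissible q H pmax P →
      epValue q H n (fun Ph s => f t Ph s v) P
        ≤ epValue q H n (fun Ph s => f t Ph s v) (Pol t v))
    (hbdd : ∀ t ∈ ΘSet, ∀ Ph s v, ∀ j : Fin q, |f t Ph s v j| ≤ dmax)
    (hVmeas : Measurable (Function.uncurry (fun t (v : Fin m → ℝ) =>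
      epValue q H n (fun Ph s => f t Ph s v) (Pol t v))))
    (hInt₁ : ∀ k, Integrable (fun ω =>
      epValue q H n (fun Ph s => f (θ ω) Ph s (z k ω)) (Pol (θ ω) (z k ω))) μ)
    (hInt₂ : ∀ k, Integrable (fun ω =>
      epValue q H n (fun Ph s => f (θ ω) Ph s (z k ω)) (Pol (θhat k ω) (z k ω))) μ)
    (hInt₃ : ∀ k, Integrable (fun ω =>
      epValue q H n (fun Ph s => f (θhat k ω) Ph s (z k ω)) (Pol (θhat k ω) (z k ω))) μ)
    (hInt₄ : ∀ k, Integrable (fun ω => ∑ h ∈ Finset.range H,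
      ‖f (θhat k ω) (Pol (θhat k ω) (z k ω) h)
          (priceHistory n (Pol (θhat k ω) (z k ω)) h) (z k ω)
        - f (θ ω) (Pol (θhat k ω) (z k ω) h)
          (priceHistory n (Pol (θhat k ω) (z k ω)) h) (z k ω)‖) μ)
    -- conditioned on `ℋ_k`, the sample `θ̂_k` and the true parameter `θ` are
    -- identically distributed (the context `z_k` being part of the history)
    (hTS : ∀ k (g : Θ → (Fin m → ℝ) → ℝ), Measurable (Function.uncurry g) →
      (∃ B : ℝ, ∀ t v, |g t v| ≤ B) →
      μ[(fun ω => g (θ ω) (z k ω)) | hist k]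
        =ᵐ[μ] μ[(fun ω => g (θhat k ω) (z k ω)) | hist k]) :
    ∀ k : ℕ,
      ∫ ω, (epValue q H n (fun Ph s => f (θ ω) Ph s (z k ω)) (Pol (θ ω) (z k ω))
            - epValue q H n (fun Ph s => f (θ ω) Ph s (z k ω)) (Pol (θhat k ω) (z k ω))) ∂μ
      ≤ q * pmax *
          ∫ ω, (∑ h ∈ Finset.range H,
            ‖f (θhat k ω) (Pol (θhat k ω) (z k ω) h)
                (priceHistory n (Pol (θhat k ω) (z k ω)) h) (z k ω)
              - f (θ ω) (Pol (θhat k ω) (z k ω) h)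
                (priceHistory n (Pol (θhat k ω) (z k ω)) h) (z k ω)‖) ∂μ := by
  
  intro k
  set g : Θ → (Fin m → ℝ) → ℝ := fun t v =>
    epValue q H n (fun Ph s => f t Ph s v) (Pol t v) with hg
  set B : ℝ := H * (q * (pmax * dmax)) with hB
  have hB0 : 0 ≤ B := by positivity
  -- bound on g on ΘSet
  have hgbdd : ∀ t ∈ ΘSet, ∀ v, |g t v| ≤ B := by
    intro t ht v
    have h1 : |g t v| ≤ ∑ h ∈ Finset.range H, ∑ _j : Fin q, pmax * dmax := by
      refine (Finset.abs_sum_le_sum_abs _ _).trans (Finset.sum_le_sum ?_)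
      intro h hh
      refine (Finset.abs_sum_le_sum_abs _ _).trans (Finset.sum_le_sum ?_)
      intro j _
      rw [abs_mul]
      have hPj := hPolAdm t v h (Finset.mem_range.mp hh) j
      exact mul_le_mul (abs_le.mpr ⟨by linarith [hPj.1], hPj.2⟩)
        (hbdd t ht _ _ _ j) (abs_nonneg _) hpmax.le
    simpa using h1
  -- truncated version of g, bounded everywhere
  set g' : Θ → (Fin m → ℝ) → ℝ := fun t v => max (-B) (min B (g t v)) with hg'
  have hg'eq : ∀ t ∈ ΘSet, ∀ v, g' t v = g t v := by
    intro t ht v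
    have := abs_le.mp (hgbdd t ht v)
    simp only [hg', min_eq_right this.2, max_eq_right this.1]
  have hg'meas : Measurable (Function.uncurry g') := by
    have : Function.uncurry g' = fun p => max (-B) (min B (Function.uncurry g p)) := rfl
    rw [this]
    exact measurable_const.max (measurable_const.min hVmeas)
  have hg'bdd : ∀ t v, |g' t v| ≤ B := by
    intro t v
    rw [abs_le]
    exact ⟨le_max_left _ _, max_le (by linarith) (min_le_left _ _)⟩
  -- identify composite functions
  have hcθ : (fun ω => g' (θ ω) (z k ω)) = fun ω => g (θ ω) (z k ω) :=
    funext fun ω => hg'eq _ (hθsupp ω) _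
  have hcθhat : (fun ω => g' (θhat k ω) (z k ω)) = fun ω => g (θhat k ω) (z k ω) :=
    funext fun ω => hg'eq _ (hθhatsupp k ω) _
  have hIθ : Integrable (fun ω => g' (θ ω) (z k ω)) μ := by rw [hcθ]; exact hInt₁ k
  have hIθhat : Integrable (fun ω => g' (θhat k ω) (z k ω)) μ := by
    rw [hcθhat]; exact hInt₃ k
  -- key equality of expectations via the conditional-distribution hypothesis
  have hEq : ∫ ω, g (θ ω) (z k ω) ∂μ = ∫ ω, g (θhat k ω) (z k ω) ∂μ := by
    rw [← hcθ, ← hcθhat]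
    calc ∫ ω, g' (θ ω) (z k ω) ∂μ
        = ∫ ω, (μ[(fun ω => g' (θ ω) (z k ω)) | hist k]) ω ∂μ :=
          (integral_condExp (hhist k)).symm
      _ = ∫ ω, (μ[(fun ω => g' (θhat k ω) (z k ω)) | hist k]) ω ∂μ :=
          integral_congr_ae (hTS k g' hg'meas ⟨B, hg'bdd⟩)
      _ = ∫ ω, g' (θhat k ω) (z k ω) ∂μ := integral_condExp (hhist k)
  -- pointwise bound
  have hpt : ∀ ω,
      epValue q H n (fun Ph s => f (θhat k ω) Ph s (z k ω)) (Pol (θhat k ω) (z k ω))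
        - epValue q H n (fun Ph s => f (θ ω) Ph s (z k ω)) (Pol (θhat k ω) (z k ω))
      ≤ q * pmax * ∑ h ∈ Finset.range H,
          ‖f (θhat k ω) (Pol (θhat k ω) (z k ω) h)
              (priceHistory n (Pol (θhat k ω) (z k ω)) h) (z k ω)
            - f (θ ω) (Pol (θhat k ω) (z k ω) h)
              (priceHistory n (Pol (θhat k ω) (z k ω)) h) (z k ω)‖ := by
    intro ω
    rw [epValue, epValue, ← Finset.sum_sub_distrib, Finset.mul_sum]
    refine Finset.sum_le_sum ?_
    intro h hh
    exact sum_mul_diff_le pmax hpmax _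
      (fun j => hPolAdm (θhat k ω) (z k ω) h (Finset.mem_range.mp hh) j) _ _
  calc ∫ ω, (epValue q H n (fun Ph s => f (θ ω) Ph s (z k ω)) (Pol (θ ω) (z k ω))
          - epValue q H n (fun Ph s => f (θ ω) Ph s (z k ω)) (Pol (θhat k ω) (z k ω))) ∂μ
      = ∫ ω, epValue q H n (fun Ph s => f (θ ω) Ph s (z k ω)) (Pol (θ ω) (z k ω)) ∂μ
        - ∫ ω, epValue q H n (fun Ph s => f (θ ω) Ph s (z k ω)) (Pol (θhat k ω) (z k ω)) ∂μ :=
        integral_sub (hInt₁ k) (hInt₂ k)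
    _ = ∫ ω, epValue q H n (fun Ph s => f (θhat k ω) Ph s (z k ω)) (Pol (θhat k ω) (z k ω)) ∂μ
        - ∫ ω, epValue q H n (fun Ph s => f (θ ω) Ph s (z k ω)) (Pol (θhat k ω) (z k ω)) ∂μ := by
        rw [hEq]
    _ = ∫ ω, (epValue q H n (fun Ph s => f (θhat k ω) Ph s (z k ω)) (Pol (θhat k ω) (z k ω))
        - epValue q H n (fun Ph s => f (θ ω) Ph s (z k ω)) (Pol (θhat k ω) (z k ω))) ∂μ :=
        (integral_sub (hInt₃ k) (hInt₂ k)).symm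
    _ ≤ ∫ ω, (q * pmax * ∑ h ∈ Finset.range H,
          ‖f (θhat k ω) (Pol (θhat k ω) (z k ω) h)
              (priceHistory n (Pol (θhat k ω) (z k ω)) h) (z k ω)
            - f (θ ω) (Pol (θhat k ω) (z k ω) h)
              (priceHistory n (Pol (θhat k ω) (z k ω)) h) (z k ω)‖) ∂μ :=
        integral_mono ((hInt₃ k).sub (hInt₂ k)) ((hInt₄ k).const_mul _) hpt
    _ = _ := integral_const_mul _ _


end
end

section
/- Let F_lin = { x ↦ θᵀx : θ ∈ ℝ^d, ‖θ‖₂ ≤ τ } be the class of bounded linear functions on the domain X = { x ∈ ℝ^d : ‖x‖₂ ≤ γ }, where τ, γ > 0. Then there exists a universal constant C > 0 such that for all ε ∈ (0, τ·γ], the ε-eluder dimension satisfies d_E(F_lin, ε) ≤ C·d·log(1 + τ·γ/ε). -/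
/-!
Statement 11: the `ε`-eluder dimension of the class of bounded linear functions
`F_lin = {x ↦ θᵀx : ‖θ‖₂ ≤ τ}` on `X = {x : ‖x‖₂ ≤ γ}` is at most `C·d·log(1 + τγ/ε)`
for a universal constant `C > 0`, for every `ε ∈ (0, τγ]`.
-/

noncomputable section
open scoped RealInnerProductSpace

/-- `x` is `ε`-dependent on the list `xs` with respect to the function class `G`:
any `g₁, g₂ ∈ G` with `√(Σ_j ‖g₁(x_j) - g₂(x_j)‖²) ≤ ε` also satisfy
`‖g₁(x) - g₂(x)‖ ≤ ε`. -/
def EpsDependent {X E : Type*} [NormedAddCommGroup E] (G : Set (X → E)) (ε : ℝ)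
    (x : X) (xs : List X) : Prop :=
  ∀ g₁ ∈ G, ∀ g₂ ∈ G,
    Real.sqrt ((xs.map fun y => ‖g₁ y - g₂ y‖ ^ 2).sum) ≤ ε → ‖g₁ x - g₂ x‖ ≤ ε

/-- The set of lengths of sequences in `X` such that, for some `ε' ≥ ε`, every element
is `ε'`-independent of its predecessors. -/
def eluderLengths {X E : Type*} [NormedAddCommGroup E] (G : Set (X → E)) (ε : ℝ) :
    Set ℕ :=
  {l : ℕ | ∃ xs : List X, xs.length = l ∧ ∃ ε' ≥ ε,
    ∀ i : Fin xs.length, ¬ EpsDependent G ε' (xs.get i) (xs.take (i : ℕ))}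

/-- The `ε`-eluder dimension: the length of the longest sequence of elements of `X`
such that, for some `ε' ≥ ε`, every element is `ε'`-independent of its predecessors. -/
def eluderDim {X E : Type*} [NormedAddCommGroup E] (G : Set (X → E)) (ε : ℝ) : ℕ :=
  sSup (eluderLengths G ε)

/-- The class of bounded linear functions `x ↦ θᵀx`, `‖θ‖₂ ≤ τ`, on the ball of
radius `γ` in `ℝ^d`. -/
def linClass (d : ℕ) (τ γ : ℝ) :
    Set ({x : EuclideanSpace ℝ (Fin d) // ‖x‖ ≤ γ} → ℝ) :=
  {g | ∃ θ : EuclideanSpace ℝ (Fin d), ‖θ‖ ≤ τ ∧ g = fun x => ⟪θ, x.1⟫}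

/-!
Each element `xᵢ` of an `ε`-independent sequence comes with a difference `ρᵢ = θ₁ - θ₂` of
parameters, `‖ρᵢ‖ ≤ 2τ`, which is small on the predecessors, `∑_{j<i} ⟪ρᵢ, x_j⟫² ≤ ε²`, but
large on `xᵢ`, `|⟪ρᵢ, xᵢ⟫| > ε`. For the regularized Gram matrices
`Vᵢ = η I + ∑_{j<i} x_j x_jᵀ` with `η = (ε / 2τ)²` this gives `ρᵢᵀ Vᵢ ρᵢ ≤ 2ε²`, so
Cauchy–Schwarz in the `Vᵢ`-inner product forces `xᵢᵀ Vᵢ⁻¹ xᵢ ≥ 1/2`, and the matrix determinant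
lemma gives `det V_{i+1} ≥ (3/2) det Vᵢ`. AM–GM on the eigenvalues bounds `det V_N` from above
by `(η + Nγ²/d)^d`, hence `N log(3/2) ≤ d log(1 + N (2τγ/ε)² / d)`, which solves to
`N = O(d log(1 + τγ/ε))`.
-/

open Finset Matrix

lemma List.sum_map_take_eq_sum_range_getD {α M : Type*} [AddCommMonoid M] (l : List α)
    (f : α → M) {a : α} (ha : f a = 0) (k : ℕ) :
    ((l.take k).map f).sum = ∑ j ∈ Finset.range k, f (l.getD j a) := by
  induction k with
  | zero => simp
  | succ k ih =>
    rw [List.take_add_one, List.map_append, List.sum_append, ih, Finset.sum_range_succ,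
      List.getD_eq_getElem?_getD]
    cases l[k]? <;> simp [ha]

lemma Nat.cast_sSup_le {S : Set ℕ} {B : ℝ} (hS : S.Nonempty) (h : ∀ k ∈ S, (k : ℝ) ≤ B) :
    ((sSup S : ℕ) : ℝ) ≤ B :=
  h _ <| Nat.sSup_mem hS ⟨⌈B⌉₊, fun k hk => by exact_mod_cast (h k hk).trans (Nat.le_ceil B)⟩

lemma Real.prod_le_mean_pow {ι : Type*} [Fintype ι] {μ : ι → ℝ} (hμ : ∀ i, 0 ≤ μ i) :
    ∏ i, μ i ≤ ((∑ i, μ i) / Fintype.card ι) ^ Fintype.card ι := by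
  rcases isEmpty_or_nonempty ι with _ | _
  · simp
  have hcard : (0 : ℝ) < Fintype.card ι := by exact_mod_cast Fintype.card_pos
  have hw : ∑ _i : ι, (Fintype.card ι : ℝ)⁻¹ = 1 := by simp [hcard.ne']
  have h := Real.geom_mean_le_arith_mean_weighted univ (fun _ => (Fintype.card ι : ℝ)⁻¹) μ
    (fun _ _ => by positivity) hw (fun i _ => hμ i)
  rw [Real.finsetProd_rpow _ _ (fun i _ => hμ i), ← mul_sum, inv_mul_eq_div] at h
  have hprod : 0 ≤ ∏ i, μ i := prod_nonneg fun i _ => hμ i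
  calc ∏ i, μ i = ((∏ i, μ i) ^ (Fintype.card ι : ℝ)⁻¹) ^ Fintype.card ι := by
        rw [← Real.rpow_natCast, ← Real.rpow_mul hprod, inv_mul_cancel₀ hcard.ne', Real.rpow_one]
    _ ≤ _ := by gcongr

-- With `m = N / d`: `log (1 + m) ≤ m / 6 + 5`, `1 / 3 ≤ log (3 / 2)` and `1 / 2 ≤ log (1 + s)`
-- give `m ≤ 30 + 6 log (1 + s) ≤ 66 log (1 + s)`.
lemma Real.le_mul_log_one_add_of_mul_log_le {N d s : ℝ} (hN : 0 ≤ N) (hd : 0 ≤ d) (hs : 1 ≤ s)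
    (h : N * Real.log (3 / 2) ≤ d * Real.log (1 + N * s / d)) :
    N ≤ 66 * d * Real.log (1 + s) := by
  have hlog32 : 1 / 3 ≤ Real.log (3 / 2) := by
    have := Real.one_sub_inv_le_log_of_pos (x := 3 / 2) (by norm_num)
    norm_num at this ⊢
    linarith
  have hL : 1 / 2 ≤ Real.log (1 + s) := by
    have := Real.one_sub_inv_le_log_of_pos (x := 1 + s) (by linarith)
    have : (1 + s)⁻¹ ≤ 1 / 2 := by rw [inv_le_comm₀ (by linarith) (by norm_num)]; linarith
    linarith
  rcases hd.eq_or_lt with rfl | hd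
  · simp only [div_zero, add_zero, Real.log_one, mul_zero] at h
    nlinarith
  set m := N / d with hm
  have hNm : N = m * d := by rw [hm, div_mul_cancel₀ _ hd.ne']
  have hm0 : 0 ≤ m := by positivity
  have hms : N * s / d = m * s := by rw [hm]; ring
  rw [hms, hNm, mul_comm m, mul_assoc] at h
  have hmain : m * Real.log (3 / 2) ≤ Real.log (1 + m) + Real.log (1 + s) := by
    rw [← Real.log_mul (by positivity) (by positivity)]
    refine (le_of_mul_le_mul_left h hd).trans (Real.log_le_log (by positivity) ?_)
    nlinarith
  have hlog_m : Real.log (1 + m) ≤ m / 6 + 5 := by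
    have h6 := Real.log_le_sub_one_of_pos (x := 6) (by norm_num)
    have hq := Real.log_le_sub_one_of_pos (x := (1 + m) / 6) (by positivity)
    rw [Real.log_div (by positivity) (by norm_num)] at hq
    linarith
  rw [hNm]
  nlinarith

lemma Real.log_one_add_sq_le {r : ℝ} (hr : 0 ≤ r) :
    Real.log (1 + (2 * r) ^ 2) ≤ 4 * Real.log (1 + r) := by
  have h4 := Real.log_pow (1 + r) 4
  push_cast at h4
  rw [← h4]
  exact Real.log_le_log (by positivity) (by nlinarith [pow_nonneg hr 3, pow_nonneg hr 4])

namespace Matrix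

section PosDef

variable {n : Type*} [Fintype n] [DecidableEq n]

lemma PosDef.dotProduct_sq_le {A : Matrix n n ℝ} (hA : A.PosDef) (x y : n → ℝ) :
    (x ⬝ᵥ y) ^ 2 ≤ (x ⬝ᵥ (A *ᵥ x)) * (y ⬝ᵥ (A⁻¹ *ᵥ y)) := by
  -- Cauchy–Schwarz for the inner product `⟪u, w⟫ = (A *ᵥ w) ⬝ᵥ u`, applied to `x` and `A⁻¹ *ᵥ y`.
  let := A.toSeminormedAddCommGroup hA.posSemidef
  let := A.toInnerProductSpace hA.posSemidef
  have hAw : A *ᵥ (A⁻¹ *ᵥ y) = y := by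
    rw [mulVec_mulVec, mul_nonsing_inv _ (hA.isUnit.map detMonoidHom), one_mulVec]
  have h := real_inner_mul_inner_self_le x (A⁻¹ *ᵥ y)
  change ((A *ᵥ (A⁻¹ *ᵥ y)) ⬝ᵥ star x) * ((A *ᵥ (A⁻¹ *ᵥ y)) ⬝ᵥ star x) ≤
    ((A *ᵥ x) ⬝ᵥ star x) * ((A *ᵥ (A⁻¹ *ᵥ y)) ⬝ᵥ star (A⁻¹ *ᵥ y)) at h
  simpa only [hAw, star_trivial, dotProduct_comm _ x, dotProduct_comm y, sq] using h

lemma PosDef.lt_dotProduct_inv_mulVec {A : Matrix n n ℝ} (hA : A.PosDef) {ρ x : n → ℝ}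
    {a c : ℝ} (hρ : ρ ⬝ᵥ (A *ᵥ ρ) ≤ a) (hx : c * a < (ρ ⬝ᵥ x) ^ 2) :
    c < x ⬝ᵥ (A⁻¹ *ᵥ x) := by
  have hcs := hA.dotProduct_sq_le ρ x
  have hq := hA.inv.posSemidef.dotProduct_mulVec_nonneg x
  have hρ0 := hA.posSemidef.dotProduct_mulVec_nonneg ρ
  rw [star_trivial] at hq hρ0
  nlinarith [mul_le_mul_of_nonneg_right hρ hq]

theorem det_add_vecMulVec {A : Matrix n n ℝ} (hA : IsUnit A.det) (x y : n → ℝ) :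
    (A + vecMulVec x y).det = A.det * (1 + y ⬝ᵥ (A⁻¹ *ᵥ x)) := by
  rw [vecMulVec_eq Unit, det_add_replicateCol_mul_replicateRow hA, ← replicateRow_vecMul,
    det_unique (1 + _), add_apply, one_apply_eq, replicateRow_mul_replicateCol_apply,
    ← dotProduct_mulVec]

lemma PosSemidef.det_le_trace_div_pow {A : Matrix n n ℝ} (hA : A.PosSemidef) :
    A.det ≤ (A.trace / Fintype.card n) ^ Fintype.card n := by
  rw [hA.isHermitian.det_eq_prod_eigenvalues, hA.isHermitian.trace_eq_sum_eigenvalues]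
  exact Real.prod_le_mean_pow hA.eigenvalues_nonneg

end PosDef

section RegularizedGram

variable {n : Type*} [DecidableEq n]

def regularizedGram (η : ℝ) (v : ℕ → n → ℝ) (k : ℕ) : Matrix n n ℝ :=
  η • 1 + ∑ j ∈ range k, vecMulVec (v j) (v j)

variable {η : ℝ} {v : ℕ → n → ℝ}

lemma regularizedGram_succ (k : ℕ) :
    regularizedGram η v (k + 1) = regularizedGram η v k + vecMulVec (v k) (v k) := by
  rw [regularizedGram, regularizedGram, sum_range_succ, add_assoc]

variable [Fintype n]

lemma dotProduct_regularizedGram_mulVec (k : ℕ) (x : n → ℝ) :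
    x ⬝ᵥ (regularizedGram η v k *ᵥ x) = η * (x ⬝ᵥ x) + ∑ j ∈ range k, (v j ⬝ᵥ x) ^ 2 := by
  simp only [regularizedGram, add_mulVec, smul_mulVec, one_mulVec, sum_mulVec, vecMulVec_mulVec,
    dotProduct_add, dotProduct_smul, dotProduct_sum, op_smul_eq_smul, smul_eq_mul]
  congr 1
  exact sum_congr rfl fun j _ => by rw [dotProduct_comm x, sq]

lemma posDef_regularizedGram (hη : 0 < η) (k : ℕ) : (regularizedGram η v k).PosDef :=
  (PosDef.one.smul hη).add_posSemidef <| posSemidef_sum _ fun j _ => by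
    simpa using posSemidef_vecMulVec_self_star (v j)

lemma trace_regularizedGram (k : ℕ) :
    (regularizedGram η v k).trace = η * Fintype.card n + ∑ j ∈ range k, v j ⬝ᵥ v j := by
  simp [regularizedGram, trace_sum]

lemma det_regularizedGram_le (hη : 0 < η) {N : ℕ} {B : ℝ} (hv : ∀ j < N, v j ⬝ᵥ v j ≤ B) :
    (regularizedGram η v N).det ≤ (η + N * B / Fintype.card n) ^ Fintype.card n := by
  refine (posDef_regularizedGram hη N).posSemidef.det_le_trace_div_pow.trans ?_
  have htrace : (regularizedGram η v N).trace ≤ η * Fintype.card n + N * B := by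
    rw [trace_regularizedGram]
    simpa using sum_le_sum fun j hj => hv j (mem_range.1 hj)
  gcongr
  · exact div_nonneg (posDef_regularizedGram hη N).posSemidef.trace_nonneg (Nat.cast_nonneg _)
  rcases (Nat.cast_nonneg (Fintype.card n) : (0 : ℝ) ≤ _).eq_or_lt with hd | hd
  · rw [← hd, div_zero, div_zero, add_zero]
    exact hη.le
  · rw [div_le_iff₀ hd, add_mul, div_mul_cancel₀ _ hd.ne']
    linarith

lemma pow_mul_pow_le_det_regularizedGram (hη : 0 < η) {c : ℝ} (hc : 0 ≤ c) {N : ℕ}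
    (h : ∀ i < N, c ≤ v i ⬝ᵥ ((regularizedGram η v i)⁻¹ *ᵥ v i)) :
    η ^ Fintype.card n * (1 + c) ^ N ≤ (regularizedGram η v N).det := by
  induction N with
  | zero => simp [regularizedGram]
  | succ k ih =>
    rw [regularizedGram_succ, det_add_vecMulVec (posDef_regularizedGram hη k).det_pos.ne'.isUnit,
      pow_succ, ← mul_assoc]
    gcongr
    · exact (posDef_regularizedGram hη k).det_pos.le
    · exact ih fun i hi => h i (hi.trans k.lt_succ_self)
    · exact h k k.lt_succ_self

theorem mul_log_one_add_le_card_mul_log (hη : 0 < η) {c B : ℝ} (hc : 0 ≤ c) {N : ℕ}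
    (hv : ∀ j < N, v j ⬝ᵥ v j ≤ B)
    (h : ∀ i < N, c ≤ v i ⬝ᵥ ((regularizedGram η v i)⁻¹ *ᵥ v i)) :
    N * Real.log (1 + c) ≤ Fintype.card n * Real.log (1 + N * B / (Fintype.card n * η)) := by
  have hfactor : η + N * B / Fintype.card n = η * (1 + N * B / (Fintype.card n * η)) := by
    rw [mul_add, mul_one, mul_div_assoc', mul_comm _ η, mul_div_mul_left _ _ hη.ne']
  have hdet := (pow_mul_pow_le_det_regularizedGram hη hc h).trans (det_regularizedGram_le hη hv)
  rw [hfactor, mul_pow] at hdet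
  have hpow := le_of_mul_le_mul_left hdet (pow_pos hη _)
  rw [← Real.log_pow, ← Real.log_pow]
  exact Real.log_le_log (by positivity) hpow

end RegularizedGram

end Matrix

section LinClass

variable {d : ℕ} {τ γ ε : ℝ}

lemma exists_witness_of_not_epsDependent_linClass {x : {x : EuclideanSpace ℝ (Fin d) // ‖x‖ ≤ γ}}
    {xs : List {x : EuclideanSpace ℝ (Fin d) // ‖x‖ ≤ γ}}
    (h : ¬EpsDependent (linClass d τ γ) ε x xs) :
    ∃ ρ : EuclideanSpace ℝ (Fin d), ‖ρ‖ ≤ 2 * τ ∧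
      (xs.map fun y => ⟪ρ, y.1⟫ ^ 2).sum ≤ ε ^ 2 ∧ ε < |⟪ρ, x.1⟫| := by
  simp only [EpsDependent, not_forall, not_le, exists_prop] at h
  obtain ⟨_, ⟨θ₁, hθ₁, rfl⟩, _, ⟨θ₂, hθ₂, rfl⟩, hsmall, hlarge⟩ := h
  refine ⟨θ₁ - θ₂, (norm_sub_le _ _).trans (by linarith), ?_, ?_⟩
  · simpa [inner_sub_left, Real.norm_eq_abs, sq_abs] using (Real.sqrt_le_iff.1 hsmall).2
  · simpa [inner_sub_left, Real.norm_eq_abs] using hlarge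

theorem length_mul_log_le_of_forall_not_epsDependent (hτ : 0 < τ) (hγ : 0 ≤ γ) (hε : 0 < ε)
    {xs : List {x : EuclideanSpace ℝ (Fin d) // ‖x‖ ≤ γ}}
    (hind : ∀ i : Fin xs.length, ¬EpsDependent (linClass d τ γ) ε (xs.get i) (xs.take i)) :
    xs.length * Real.log (3 / 2) ≤ d * Real.log (1 + xs.length * (2 * τ * γ / ε) ^ 2 / d) := by
  let o : {x : EuclideanSpace ℝ (Fin d) // ‖x‖ ≤ γ} := ⟨0, by simpa using hγ⟩
  set v : ℕ → Fin d → ℝ := fun j => (xs.getD j o).1.ofLp with hv_def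
  set η := (ε / (2 * τ)) ^ 2 with hη_def
  have hη : 0 < η := by positivity
  have hinner : ∀ ρ y : EuclideanSpace ℝ (Fin d), ⟪ρ, y⟫ = y.ofLp ⬝ᵥ ρ.ofLp := fun ρ y => by
    simp [EuclideanSpace.inner_eq_star_dotProduct]
  have hv : ∀ j < xs.length, v j ⬝ᵥ v j ≤ γ ^ 2 := fun j _ => by
    rw [hv_def, ← hinner, real_inner_self_eq_norm_sq]
    exact pow_le_pow_left₀ (norm_nonneg _) (xs.getD j o).2 2
  have hstep : ∀ i < xs.length, 1 / 2 ≤ v i ⬝ᵥ ((regularizedGram η v i)⁻¹ *ᵥ v i) := by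
    intro i hi
    obtain ⟨ρ, hρ, hsum, hlarge⟩ := exists_witness_of_not_epsDependent_linClass (hind ⟨i, hi⟩)
    rw [List.sum_map_take_eq_sum_range_getD _ _ (a := o) (by simp [o])] at hsum
    simp only [hinner] at hsum hlarge
    rw [List.get_eq_getElem, ← List.getD_eq_getElem _ o] at hlarge
    have hreg : η * ‖ρ‖ ^ 2 ≤ ε ^ 2 := by
      calc η * ‖ρ‖ ^ 2 ≤ η * (2 * τ) ^ 2 := by gcongr
        _ = ε ^ 2 := by rw [hη_def]; field_simp
    have hquad : ρ.ofLp ⬝ᵥ (regularizedGram η v i *ᵥ ρ.ofLp) ≤ 2 * ε ^ 2 := by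
      rw [dotProduct_regularizedGram_mulVec, ← hinner, real_inner_self_eq_norm_sq]
      linarith [add_le_add hreg hsum]
    refine ((posDef_regularizedGram hη i).lt_dotProduct_inv_mulVec hquad ?_).le
    rw [dotProduct_comm, ← sq_abs (v i ⬝ᵥ ρ.ofLp), one_div_mul_eq_div,
      mul_div_cancel_left₀ _ two_ne_zero]
    exact pow_lt_pow_left₀ hlarge hε.le two_ne_zero
  have hratio : xs.length * γ ^ 2 / (d * η) = xs.length * (2 * τ * γ / ε) ^ 2 / d := by
    rw [mul_comm (d : ℝ), ← div_div, hη_def]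
    congr 1
    field_simp
  have h := mul_log_one_add_le_card_mul_log hη (by norm_num) hv hstep
  rwa [Fintype.card_fin, hratio, show (1 : ℝ) + 1 / 2 = 3 / 2 by norm_num] at h

end LinClass

/-- There is a universal constant `C > 0` such that for all
`d`, `τ, γ > 0` and `ε ∈ (0, τγ]`, `d_E(F_lin, ε) ≤ C·d·log(1 + τγ/ε)`. -/
theorem eluderDim_linClass_le :
    ∃ C : ℝ, 0 < C ∧ ∀ (d : ℕ) (τ γ : ℝ), 0 < τ → 0 < γ →
      ∀ ε : ℝ, ε ∈ Set.Ioc 0 (τ * γ) →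
        (eluderDim (linClass d τ γ) ε : ℝ) ≤ C * d * Real.log (1 + τ * γ / ε) := by
  refine ⟨264, by norm_num, fun d τ γ hτ hγ ε ⟨hε, hετγ⟩ => ?_⟩
  refine Nat.cast_sSup_le ⟨0, [], rfl, ε, le_rfl, fun i => i.elim0⟩ ?_
  rintro _ ⟨xs, rfl, ε', hε', hind⟩
  have hε'0 : 0 < ε' := hε.trans_le hε'
  set r := τ * γ / ε
  have hr : 1 ≤ r := (one_le_div hε).2 hετγ
  have h : (xs.length : ℝ) * Real.log (3 / 2) ≤ d * Real.log (1 + xs.length * (2 * r) ^ 2 / d) :=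
    calc _ ≤ d * Real.log (1 + xs.length * (2 * τ * γ / ε') ^ 2 / d) :=
          length_mul_log_le_of_forall_not_epsDependent hτ hγ.le hε'0 hind
      _ ≤ _ := by
          rw [show 2 * r = 2 * τ * γ / ε by ring]
          gcongr
  calc (xs.length : ℝ) ≤ 66 * d * Real.log (1 + (2 * r) ^ 2) :=
        Real.le_mul_log_one_add_of_mul_log_le (Nat.cast_nonneg _) (Nat.cast_nonneg _)
          (by nlinarith) h
    _ ≤ 66 * d * (4 * Real.log (1 + r)) := by gcongr; exact Real.log_one_add_sq_le (by positivity)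
    _ = 264 * d * Real.log (1 + r) := by ring
end
end
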